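/- Let G be a group in which for all commuting pairs a, b ∈ G and all u ∈ G, b commutes with [a, u]. If G is finite, then every full balanced commutator tree of sufficiently large height evaluates to 1; in particular, G is solvable. -/

import Mathlib

def gcomm {G : Type*} [Group G] (a b : G) : G := a⁻¹ * b⁻¹ * a * b

def Bset (G : Type*) [Group G] : ℕ → Set G
  | 0 => Set.univ
  | p + 1 => {z | ∃ x ∈ Bset G p, ∃ y ∈ Bset G p, z = gcomm x y}

/-!
Taking `b = a` in the hypothesis, `a` commutes with `[a, u]`, hence with its conjugate
`u⁻¹ a u = a [a, u]`. Then any two conjugates of `a` commute, so the normal closure of any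
`a ≠ 1` is a nontrivial abelian normal subgroup. The property passes to the quotient, which is
smaller, so `G` is solvable by induction on its order. A commutator tree of height `p` lies in
the `p`-th derived subgroup, which is trivial for large `p`.
-/

open Subgroup
open scoped commutatorElement

section CommuteConj

variable {G : Type*} [Group G]

theorem commute_conj_self_of_commute_gcomm (H : ∀ a u : G, Commute a (gcomm a u)) (a g : G) :
    Commute (g * a * g⁻¹) a := by
  have hconj : g * a * g⁻¹ = a * gcomm a g⁻¹ := by simp only [gcomm]; group
  rw [hconj]
  exact ((Commute.refl a).mul_right (H a g⁻¹)).symm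

theorem commute_of_isConj_of_isConj (hconj : ∀ a g : G, Commute (g * a * g⁻¹) a)
    {a x y : G} (hx : IsConj a x) (hy : IsConj a y) : Commute x y := by
  obtain ⟨g, rfl⟩ := isConj_iff.1 hx
  obtain ⟨k, rfl⟩ := isConj_iff.1 hy
  simpa [mul_assoc] using ((hconj a (g⁻¹ * k)).map (MulAut.conj g)).symm

theorem isMulCommutative_normalClosure_singleton (hconj : ∀ a g : G, Commute (g * a * g⁻¹) a)
    (a : G) : IsMulCommutative (normalClosure {a}) := by
  refine isMulCommutative_closure fun x hx y hy => ?_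
  obtain ⟨_, rfl, hax⟩ := Group.mem_conjugatesOfSet_iff.1 hx
  obtain ⟨_, rfl, hay⟩ := Group.mem_conjugatesOfSet_iff.1 hy
  exact commute_of_isConj_of_isConj hconj hax hay

theorem commute_conj_self_quotient (hconj : ∀ a g : G, Commute (g * a * g⁻¹) a)
    (N : Subgroup G) [N.Normal] (a g : G ⧸ N) : Commute (g * a * g⁻¹) a := by
  induction a using QuotientGroup.induction_on
  induction g using QuotientGroup.induction_on
  exact (hconj _ _).map (QuotientGroup.mk' N)

end CommuteConj

theorem isSolvable_of_commute_conj_self {G : Type*} [hG : Group G] [Finite G]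
    (hconj : ∀ a g : G, Commute (g * a * g⁻¹) a) : Group.IsSolvable G := by
  induction G using Finite.induction_subsingleton_or_nontrivial generalizing hG with
  | hbase => infer_instance
  | hstep G ih =>
    obtain ⟨a, ha⟩ := exists_ne (1 : G)
    set A := normalClosure ({a} : Set G)
    have : IsMulCommutative A := isMulCommutative_normalClosure_singleton hconj a
    have hsolvA : Group.IsSolvable A := Group.isSolvable_of_comm mul_comm'
    have hA : A ≠ ⊥ := by simpa [A] using ha
    have hcard : Nat.card (G ⧸ A) < Nat.card G := by
      rw [card_eq_card_quotient_mul_card_subgroup A]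
      exact lt_mul_of_one_lt_right Nat.card_pos ((one_lt_card_iff_ne_bot A).2 hA)
    have hsolvQ : Group.IsSolvable (G ⧸ A) := ih _ hcard (commute_conj_self_quotient hconj A)
    exact (Group.isSolvable_iff_subgroup_quotient A).2 ⟨hsolvA, hsolvQ⟩

section Bset

variable {G : Type*} [Group G]

theorem gcomm_eq_commutatorElement (a b : G) : gcomm a b = ⁅a⁻¹, b⁻¹⁆ := by
  simp only [gcomm, commutatorElement_def, inv_inv]

theorem Bset_subset_derivedSeries (p : ℕ) : Bset G p ⊆ derivedSeries G p := by
  induction p with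
  | zero => exact fun x _ => mem_top x
  | succ p ih =>
    rintro _ ⟨x, hx, y, hy, rfl⟩
    rw [gcomm_eq_commutatorElement, derivedSeries_succ]
    exact commutator_mem_commutator (inv_mem (ih hx)) (inv_mem (ih hy))

theorem eq_one_of_mem_Bset_of_derivedSeries_eq_bot {n p : ℕ} (hn : derivedSeries G n = ⊥)
    (hp : n ≤ p) {x : G} (hx : x ∈ Bset G p) : x = 1 := by
  have hx' := derivedSeries_antitone G hp (Bset_subset_derivedSeries p hx)
  rwa [hn, mem_bot] at hx'

end Bset

theorem finite_centralizing_implies_solvable {G : Type*} [Group G] [Finite G]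
    (H : ∀ a b u : G, a * b = b * a → b * gcomm a u = gcomm a u * b) :
    (∃ N : ℕ, ∀ p : ℕ, N ≤ p → ∀ x ∈ Bset G p, x = 1) ∧ IsSolvable G := by
  have hsolv :=
    isSolvable_of_commute_conj_self (commute_conj_self_of_commute_gcomm fun a u => H a a u rfl)
  obtain ⟨n, hn⟩ := hsolv.solvable
  exact ⟨⟨n, fun _ hp _ => eq_one_of_mem_Bset_of_derivedSeries_eq_bot hn hp⟩, hsolv⟩
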